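/- arXiv:0906.2133 — 11 statements merged into one kernel-verified Lean document; each statement's English description precedes it below -/
import Mathlib

section
/- Let V be a finite nontrivial Boolean ring with cardinality 2^N. Then V has exactly N logical primes, i.e., the set {p ∈ V | p ≠ 1 and for all a ∈ V, p*a = 0 implies a = 0 or a = 1 + p} has exactly N elements. -/
/-!
A Boolean ring is a Boolean algebra under `a ≤ b ↔ a * b = a`, with `⊓ = *` and `aᶜ = 1 + a`.
There `p * a = 0` says `a ≤ pᶜ`, so the logical primes are exactly the coatoms, which
complementation puts in bijection with the atoms. A finite Boolean algebra is the powerset of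
its atoms, so a Boolean ring of cardinality `2 ^ N` has `N` atoms, hence `N` logical primes.
-/

theorem BooleanAlgebra.card_eq_two_pow_card_atoms {α : Type*} [BooleanAlgebra α] [Finite α] :
    Nat.card α = 2 ^ Nat.card {a : α // IsAtom a} := by
  have := Fintype.ofFinite α
  let := Fintype.toCompleteAtomicBooleanAlgebra α
  rw [Nat.card_congr CompleteAtomicBooleanAlgebra.toSetOfIsAtom.toEquiv]
  exact Nat.card_fun.trans (by simp)

theorem BooleanAlgebra.isCoatom_iff_disjoint {α : Type*} [BooleanAlgebra α] {p : α} :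
    IsCoatom p ↔ p ≠ ⊤ ∧ ∀ a, Disjoint p a → a = ⊥ ∨ a = pᶜ := by
  rw [← isAtom_compl, Ne, ← compl_eq_bot]
  refine ⟨fun h ↦ ⟨h.1, fun a ha ↦ h.le_iff.mp (le_compl_iff_disjoint_left.mpr ha)⟩,
    fun ⟨hp, h⟩ ↦ ⟨hp, fun a ha ↦ ?_⟩⟩
  exact (h a (le_compl_iff_disjoint_left.mp ha.le)).resolve_right ha.ne

namespace BooleanRing

variable {R : Type*} [BooleanRing R]

def IsLogicalPrime (p : R) : Prop :=
  p ≠ 1 ∧ ∀ a : R, p * a = 0 → a = 0 ∨ a = 1 + p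

theorem isLogicalPrime_iff_isCoatom {p : R} : IsLogicalPrime p ↔ IsCoatom (toBoolAlg p) := by
  have compl_eq : (toBoolAlg p)ᶜ = toBoolAlg (1 + p) := rfl
  rw [BooleanAlgebra.isCoatom_iff_disjoint, ← toBoolAlg.forall_congr_right, compl_eq]
  simp only [disjoint_iff, ← toBoolAlg_mul, ← toBoolAlg_zero, ← toBoolAlg_one, toBoolAlg_inj]
  rfl

theorem card_eq_two_pow_card_isLogicalPrime [Finite R] :
    Nat.card R = 2 ^ Nat.card {p : R // IsLogicalPrime p} := by
  have primes_equiv_atoms : {p : R // IsLogicalPrime p} ≃ {a : AsBoolAlg R // IsAtom a} :=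
    (toBoolAlg.subtypeEquiv fun _ ↦ isLogicalPrime_iff_isCoatom).trans
      (compl_involutive.toPerm.subtypeEquiv fun _ ↦ isAtom_compl.symm)
  have : Finite (AsBoolAlg R) := .of_equiv R toBoolAlg
  rw [Nat.card_congr toBoolAlg, BooleanAlgebra.card_eq_two_pow_card_atoms,
    Nat.card_congr primes_equiv_atoms]

end BooleanRing

theorem ncard_logical_primes_general (V : Type*) [CommRing V] [Fintype V]
    (hB : ∀ x : V, x * x = x) (N : ℕ) (hcard : Fintype.card V = 2 ^ N) :
    {p : V | p ≠ 1 ∧ ∀ a : V, p * a = 0 → a = 0 ∨ a = 1 + p}.ncard = N := by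
  let : BooleanRing V := { ‹CommRing V› with isIdempotentElem := fun x ↦ by exact hB x }
  have h := BooleanRing.card_eq_two_pow_card_isLogicalPrime (R := V)
  rw [Nat.card_eq_fintype_card, hcard] at h
  rw [← Nat.card_coe_set_eq]
  exact (Nat.pow_right_injective le_rfl h).symm

/-- A finite nontrivial Boolean ring of cardinality `2 ^ N` has exactly
`N` logical primes. -/
theorem ncard_logical_primes (V : Type*) [CommRing V] [Fintype V] [Nontrivial V]
    (hB : ∀ x : V, x * x = x) (N : ℕ) (hcard : Fintype.card V = 2 ^ N) :
    {p : V | p ≠ 1 ∧ ∀ a : V, p * a = 0 → a = 0 ∨ a = 1 + p}.ncard = N :=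
  ncard_logical_primes_general V hB N hcard
end

section
/- In a Boolean ring V, if p and q are two distinct logical primes, then (1 + p)*(1 + q) = 0, or equivalently p*q = p + q + 1. -/
/-- An element `p` of a Boolean ring is a *logical prime* if `p ≠ 1` and
`p * a = 0` implies `a = 0` or `a = 1 + p`. -/
def IsLogicalPrime {V : Type*} [CommRing V] (p : V) : Prop :=
  p ≠ 1 ∧ ∀ a : V, p * a = 0 → a = 0 ∨ a = 1 + p

/-- Distinct logical primes of a Boolean ring are orthogonal after
negation: `(1 + p) * (1 + q) = 0`, equivalently `p * q = p + q + 1`. -/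
theorem negated_primes_orthogonal (V : Type*) [CommRing V] (hB : ∀ x : V, x * x = x)
    (p q : V) (hp : IsLogicalPrime p) (hq : IsLogicalPrime q) (hpq : p ≠ q) :
    (1 + p) * (1 + q) = 0 ∧ p * q = p + q + 1 := by
  have h2 : (2 : V) = 0 := by
    have := hB (1 + 1)
    ring_nf at this ⊢
    linear_combination this
  have key : (1 + p) * (1 + q) = 0 := by
    have hp0 : p * ((1 + p) * (1 + q)) = 0 := by
      have := hB p
      linear_combination (1 + q) * this + (p + p * q) * h2
    rcases hp.2 _ hp0 with h | h
    · exact h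
    · have hq0 : q * ((1 + p) * (1 + q)) = 0 := by
        have := hB q
        linear_combination (1 + p) * this + (q + p * q) * h2
      rcases hq.2 _ hq0 with h' | h'
      · exact h'
      · exact absurd (by linear_combination h - h' + (p - q) * h2) hpq
  refine ⟨key, ?_⟩
  linear_combination key - (1 + p + q) * h2
end

section
/- Let V be a finite Boolean ring. Then every element a of V has a unique decomposition into logical primes: there exists a unique finite set S of logical primes of V such that a equals the product of the elements of S (the empty product being 1). -/
/-!
Ordering a Boolean ring by `x ≤ y ↔ x * y = x` turns it into a Boolean algebra in which
products are meets and `1 + x` is the complement of `x`; the condition defining a logical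
prime `p` says exactly that `1 + p` is an atom, i.e. that `p` is a coatom. In a finite Boolean
algebra every element `a` is the meet of the coatoms above it. Conversely, if `a` is the meet of
a finite set `T` of coatoms, then any coatom `c ≥ a` lies above some `t ∈ T`, because coatoms of
a distributive lattice are inf-prime, and then `c = t`; so `T` is the set of coatoms above `a`.
-/

section Coatoms

variable {α : Type*}

theorem IsCoatom.infPrime [DistribLattice α] [BoundedOrder α] {c : α} (hc : IsCoatom c) :
    InfPrime c := by
  refine ⟨fun hmax => hc.ne_top hmax.eq_top, fun b d hbd => or_iff_not_imp_left.2 fun hb => ?_⟩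
  have hcb : c ⊔ b = ⊤ := (hc.le_iff.1 le_sup_left).resolve_right fun h => hb (h ▸ le_sup_right)
  calc d = d ⊓ (c ⊔ b) := by rw [hcb, inf_top_eq]
    _ = d ⊓ c ⊔ b ⊓ d := by rw [inf_sup_left, inf_comm d b]
    _ ≤ c := sup_le inf_le_right hbd

variable [BooleanAlgebra α] [Fintype α]

theorem inf_coatoms_ge_eq [DecidablePred (IsCoatom : α → Prop)] [DecidableLE α] (a : α) :
    ({c | IsCoatom c ∧ a ≤ c} : Finset α).inf id = a := by
  refine le_antisymm (BooleanAlgebra.le_iff_atom_le_imp.2 fun x hx hxinf => ?_)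
    (Finset.le_inf fun c hc => (Finset.mem_filter.1 hc).2.2)
  by_contra hxa
  have hax : a ≤ xᶜ := le_compl_comm.1 ((hx.not_le_iff_disjoint.1 hxa).le_compl_right)
  have : x ≤ xᶜ := hxinf.trans (Finset.inf_le (by simpa using ⟨hx, hax⟩))
  exact hx.ne_bot (le_compl_self.1 this)

theorem existsUnique_finset_isCoatom_inf_eq (a : α) :
    ∃! T : Finset α, (∀ c ∈ T, IsCoatom c) ∧ T.inf id = a := by
  classical
  refine ⟨({c | IsCoatom c ∧ a ≤ c} : Finset α), ⟨fun c hc => (Finset.mem_filter.1 hc).2.1,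
    inf_coatoms_ge_eq a⟩, ?_⟩
  rintro T ⟨hT, rfl⟩
  ext c
  simp only [Finset.mem_filter, Finset.mem_univ, true_and]
  refine ⟨fun hc => ⟨hT c hc, Finset.inf_le hc⟩, fun ⟨hc, hTc⟩ => ?_⟩
  obtain ⟨t, ht, htc⟩ := hc.infPrime.finset_inf_le.1 hTc
  rwa [((hT t ht).le_iff_eq hc.ne_top).1 htc]

end Coatoms

namespace BooleanRing

variable {α : Type*} [BooleanRing α]

theorem isLogicalPrime_iff_isAtom_toBoolAlg_one_add {p : α} :
    IsLogicalPrime p ↔ IsAtom (toBoolAlg (1 + p)) := by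
  have hle (x : α) : toBoolAlg x ≤ toBoolAlg (1 + p) ↔ p * x = 0 := by
    rw [← ofBoolAlg_mul_ofBoolAlg_eq_left_iff, ofBoolAlg_toBoolAlg, ofBoolAlg_toBoolAlg, mul_add,
      mul_one, add_eq_left, mul_comm]
  have hne : p ≠ 1 ↔ toBoolAlg (1 + p) ≠ ⊥ := by
    rw [← toBoolAlg_zero, Ne, Ne, toBoolAlg_inj, add_eq_zero', eq_comm]
  constructor
  · rintro ⟨hp1, hp⟩
    refine ⟨hne.1 hp1, toBoolAlg.forall_congr_right.1 fun x hx => ?_⟩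
    obtain rfl | rfl := hp x ((hle x).1 hx.le)
    · rfl
    · exact absurd rfl hx.ne
  · intro h
    refine ⟨hne.2 h.ne_bot, fun x hx => ?_⟩
    simpa only [← toBoolAlg_zero, toBoolAlg_inj] using h.le_iff.1 ((hle x).2 hx)

theorem isLogicalPrime_iff_isCoatom_toBoolAlg {p : α} :
    IsLogicalPrime p ↔ IsCoatom (toBoolAlg p) := by
  rw [isLogicalPrime_iff_isAtom_toBoolAlg_one_add, ← isAtom_compl]
  rfl

theorem toBoolAlg_prod (S : Finset α) : toBoolAlg (∏ p ∈ S, p) = S.inf toBoolAlg := by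
  induction S using Finset.cons_induction with
  | empty => rfl
  | cons p S hp ih => rw [Finset.prod_cons, Finset.inf_cons, toBoolAlg_mul, ih]

theorem existsUnique_finset_isLogicalPrime_prod_eq [Fintype α] (a : α) :
    ∃! S : Finset α, (∀ p ∈ S, IsLogicalPrime p) ∧ ∏ p ∈ S, p = a := by
  let _ : Fintype (AsBoolAlg α) := Fintype.ofEquiv α toBoolAlg
  refine (toBoolAlg.finsetCongr.existsUnique_congr fun S => ?_).2
    (existsUnique_finset_isCoatom_inf_eq (toBoolAlg a))
  rw [Equiv.finsetCongr_apply, Finset.forall_mem_map, Finset.inf_map]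
  simp only [isLogicalPrime_iff_isCoatom_toBoolAlg, Function.id_comp, Equiv.coe_toEmbedding,
    ← toBoolAlg_prod]
  exact and_congr_right fun _ => toBoolAlg_inj.symm

end BooleanRing

/-- In a finite Boolean ring every element has a unique decomposition
as a product of a finite set of logical primes (the empty product being `1`). -/
theorem unique_prime_decomposition (V : Type*) [CommRing V] [Fintype V]
    (hB : ∀ x : V, x * x = x) (a : V) :
    ∃! S : Finset V, (∀ p ∈ S, IsLogicalPrime p) ∧ a = ∏ p ∈ S, p := by
  let _ : BooleanRing V := { toRing := inferInstance, isIdempotentElem := hB }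
  exact (existsUnique_congr fun _ => and_congr_right' eq_comm).1
    (BooleanRing.existsUnique_finset_isLogicalPrime_prod_eq a)
end

section
/- Let V be a finite Boolean ring. Then every element a of V equals the sum of its negated primes: a = Σ (1 + p), where the sum ranges over all logical primes p of V such that (1 + p)*a = 1 + p. Moreover this is the unique way to write a as a sum of distinct elements of the form 1 + p with p a logical prime. -/
instance {V : Type*} [CommRing V] [Fintype V] [DecidableEq V] :
    DecidablePred (IsLogicalPrime (V := V)) := fun p => by
  unfold IsLogicalPrime; infer_instance

section
variable {V : Type*} [CommRing V]

lemma lp_two (hB : ∀ x : V, x * x = x) : (1 : V) + 1 = 0 := by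
  linear_combination hB (1 + 1)

lemma lp_ne_zero (hB : ∀ x : V, x * x = x) {p : V} (hp : IsLogicalPrime p) :
    (1 : V) + p ≠ 0 := by
  intro h
  exact hp.1 (by linear_combination h - lp_two hB)

lemma lp_orth (hB : ∀ x : V, x * x = x) {p q : V} (hp : IsLogicalPrime p)
    (hq : IsLogicalPrime q) (hne : p ≠ q) : (1 + p) * (1 + q) = 0 := by
  have h1 : p * ((1 + p) * (1 + q)) = 0 := by
    linear_combination (1 + q) * hB p + p * (1 + q) * lp_two hB
  rcases hp.2 _ h1 with h | h
  · exact h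
  · have h2 : q * (1 + p) = 0 := by linear_combination h
    rcases hq.2 _ h2 with h3 | h3
    · exact absurd h3 (lp_ne_zero hB hp)
    · exact absurd (by linear_combination h3) hne

lemma lp_mul_sum (hB : ∀ x : V, x * x = x) [DecidableEq V] {p : V}
    (hp : IsLogicalPrime p) (T : Finset V) (hT : ∀ q ∈ T, IsLogicalPrime q) :
    (1 + p) * ∑ q ∈ T, (1 + q) = if p ∈ T then 1 + p else 0 := by
  rw [Finset.mul_sum]
  by_cases hmem : p ∈ T
  · rw [if_pos hmem, Finset.sum_eq_single p
      (fun q hq hne => lp_orth hB hp (hT q hq) (Ne.symm hne))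
      (fun h => absurd hmem h)]
    exact hB (1 + p)
  · rw [if_neg hmem]
    exact Finset.sum_eq_zero fun q hq =>
      lp_orth hB hp (hT q hq) (fun h => hmem (h ▸ hq))

lemma lp_exists (hB : ∀ x : V, x * x = x) [Fintype V] [DecidableEq V]
    {c : V} (hc : c ≠ 0) : ∃ p : V, IsLogicalPrime p ∧ (1 + p) * c = 1 + p := by
  classical
  set S : Finset V := Finset.univ.filter (fun x => x ≠ 0 ∧ x * c = x) with hS
  have hcS : c ∈ S := by simp [hS, hc, hB c]
  obtain ⟨d, hdS, hdmin⟩ := S.exists_min_image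
    (fun x => (Finset.univ.filter (fun y : V => y * x = y)).card) ⟨c, hcS⟩
  simp only [hS, Finset.mem_filter, Finset.mem_univ, true_and] at hdS
  obtain ⟨hd0, hdc⟩ := hdS
  have key : ∀ x : V, x * d = x → x = 0 ∨ x = d := by
    intro x hx
    by_cases hx0 : x = 0
    · exact Or.inl hx0
    by_cases hxd : x = d
    · exact Or.inr hxd
    exfalso
    have hxc : x * c = x := by
      calc x * c = x * d * c := by rw [hx]
        _ = x * (d * c) := by ring
        _ = x * d := by rw [hdc]
        _ = x := hx
    have hxS : x ∈ S := by simp [hS, hx0, hxc]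
    have hle := hdmin x hxS
    have hsub : Finset.univ.filter (fun y : V => y * x = y) ⊂
        Finset.univ.filter (fun y : V => y * d = y) := by
      constructor
      · intro y hy
        simp only [Finset.mem_filter, Finset.mem_univ, true_and] at hy ⊢
        calc y * d = y * x * d := by rw [hy]
          _ = y * (x * d) := by ring
          _ = y * x := by rw [hx]
          _ = y := hy
      · intro hsub'
        have hdx : d * x = d := by
          have := hsub' (by simp [hB d] : d ∈ Finset.univ.filter (fun y : V => y * d = y))
          simpa using this
        exact hxd (by linear_combination hx - hdx + (x - d) * lp_two hB)
    exact absurd hle (not_le.mpr (Finset.card_lt_card hsub))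
  refine ⟨1 + d, ⟨?_, ?_⟩, ?_⟩
  · intro h
    exact hd0 (by linear_combination h)
  · intro x hx
    have hxd : x * d = x := by
      linear_combination -hx + x * d * lp_two hB
    rcases key x hxd with h | h
    · exact Or.inl h
    · exact Or.inr (by linear_combination h - lp_two hB)
  · have : (1 + (1 + d)) = d := by linear_combination lp_two hB
    rw [this]; exact hdc
end

/-- In a finite Boolean ring every element `a` equals the sum of the
negated primes `1 + p` over all logical primes `p` with `(1 + p) * a = 1 + p`, and this
is the unique way to write `a` as a sum of distinct negated primes. -/
theorem unique_negated_prime_sum (V : Type*) [CommRing V] [Fintype V] [DecidableEq V]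
    (hB : ∀ x : V, x * x = x) (a : V) :
    a = ∑ p ∈ Finset.univ.filter (fun p => IsLogicalPrime p ∧ (1 + p) * a = 1 + p),
        (1 + p) ∧
    ∀ S : Finset V, (∀ p ∈ S, IsLogicalPrime p) → a = ∑ p ∈ S, (1 + p) →
      S = Finset.univ.filter (fun p => IsLogicalPrime p ∧ (1 + p) * a = 1 + p) := by
  classical
  set F := Finset.univ.filter (fun p => IsLogicalPrime p ∧ (1 + p) * a = 1 + p) with hF
  have hFprime : ∀ q ∈ F, IsLogicalPrime q := fun q hq => ((Finset.mem_filter.mp hq).2).1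
  have hex : a = ∑ p ∈ F, (1 + p) := by
    by_contra hne
    have hc : a + ∑ p ∈ F, (1 + p) ≠ 0 := by
      intro h
      exact hne (by linear_combination h - (∑ p ∈ F, (1 + p)) * lp_two hB)
    obtain ⟨p, hp, hpc⟩ := lp_exists hB hc
    have hps := lp_mul_sum hB hp F hFprime
    by_cases hmem : p ∈ F
    · rw [if_pos hmem] at hps
      have hpa : (1 + p) * a = 1 + p := ((Finset.mem_filter.mp hmem).2).2
      exact lp_ne_zero hB hp (by linear_combination hpc - hpa - hps)
    · rw [if_neg hmem] at hps
      have hpa : (1 + p) * a = 1 + p := by linear_combination hpc - hps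
      exact hmem (Finset.mem_filter.mpr ⟨Finset.mem_univ p, hp, hpa⟩)
  refine ⟨hex, ?_⟩
  intro S hS hsum
  ext p
  constructor
  · intro hpS
    have hp := hS p hpS
    have hms := lp_mul_sum hB hp S hS
    rw [if_pos hpS] at hms
    exact Finset.mem_filter.mpr ⟨Finset.mem_univ p, hp, by rw [hsum]; exact hms⟩
  · intro hpF
    obtain ⟨-, hp, hpa⟩ := Finset.mem_filter.mp hpF
    have hms := lp_mul_sum hB hp S hS
    rw [← hsum] at hms
    by_contra hns
    rw [if_neg hns] at hms
    exact lp_ne_zero hB hp (by linear_combination hpa - hms + (1 + p) * lp_two hB)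
end

section
/- Let V be a finite nontrivial Boolean ring. Then the sum over all logical primes p of V of the negated primes 1 + p equals 1, and the product over all logical primes of V equals 0. -/
/-- In a finite nontrivial Boolean ring the sum of all negated primes
is `1` and the product of all logical primes is `0`. -/
theorem sum_negated_primes_and_prod_primes (V : Type*) [CommRing V] [Fintype V]
    [DecidableEq V] [Nontrivial V] (hB : ∀ x : V, x * x = x) :
    (∑ p ∈ Finset.univ.filter (fun p : V => IsLogicalPrime p), (1 + p)) = 1 ∧
    (∏ p ∈ Finset.univ.filter (fun p : V => IsLogicalPrime p), p) = 0 := by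
  classical
  set S := Finset.univ.filter (fun p : V => IsLogicalPrime p) with hSdef
  have h2 : ∀ x : V, x + x = 0 := by
    intro x
    have h := hB (x + x)
    have hx := hB x
    linear_combination h - 4 * hx
  -- distinct primes have orthogonal complements
  have hC1 : ∀ p ∈ S, ∀ q ∈ S, p ≠ q → (1 + p) * (1 + q) = 0 := by
    intro p hp q hq hne
    rw [hSdef, Finset.mem_filter] at hp hq
    obtain ⟨-, hp1, hpP⟩ := hp
    obtain ⟨-, hq1, hqP⟩ := hq
    have hq0 : q * ((1 + p) * (1 + q)) = 0 := by
      have hqe : q * (1 + q) = 0 := by linear_combination hB q + h2 q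
      calc q * ((1 + p) * (1 + q)) = (1 + p) * (q * (1 + q)) := by ring
        _ = 0 := by rw [hqe, mul_zero]
    rcases hqP _ hq0 with h0 | heq
    · exact h0
    · have hp0 : p * (1 + q) = 0 := by
        have hpe : p * (1 + p) = 0 := by linear_combination hB p + h2 p
        calc p * (1 + q) = p * ((1 + p) * (1 + q)) := by rw [heq]
          _ = (1 + q) * (p * (1 + p)) := by ring
          _ = 0 := by rw [hpe, mul_zero]
      rcases hpP _ hp0 with h0 | heq2
      · exact absurd (show q = 1 by linear_combination h0 - h2 1) hq1
      · exact absurd (show p = q by linear_combination -heq2) hne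
  -- every nonzero element has an "atom" (complement of a prime) below it
  have hC2 : ∀ n (x : V), (Finset.univ.filter (fun y : V => y * x = y)).card ≤ n →
      x ≠ 0 → ∃ p ∈ S, (1 + p) * x = 1 + p := by
    intro n
    induction n with
    | zero =>
      intro x hcard hx
      exfalso
      have : x ∈ Finset.univ.filter (fun y : V => y * x = y) := by
        simp [hB x]
      have := Finset.card_pos.mpr ⟨x, this⟩
      omega
    | succ n ih =>
      intro x hcard hx
      by_cases hatom : ∀ y : V, y * x = y → y = 0 ∨ y = x
      · refine ⟨1 + x, ?_, ?_⟩
        · rw [hSdef, Finset.mem_filter]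
          refine ⟨Finset.mem_univ _, ?_, ?_⟩
          · intro h
            exact hx (by linear_combination h)
          · intro a ha
            have hax : a * x = a := by linear_combination ha - h2 a
            rcases hatom a hax with h0 | hxa
            · exact Or.inl h0
            · exact Or.inr (by linear_combination hxa - h2 1)
        · have hxx : (1 : V) + (1 + x) = x := by linear_combination h2 1
          rw [hxx]
          exact hB x
      · push_neg at hatom
        obtain ⟨y, hyx, hy0, hyxne⟩ := hatom
        have hsub : (Finset.univ.filter (fun z : V => z * y = z)) ⊂
            (Finset.univ.filter (fun z : V => z * x = z)) := by
          constructor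
          · intro z hz
            rw [Finset.mem_filter] at hz ⊢
            refine ⟨Finset.mem_univ _, ?_⟩
            calc z * x = (z * y) * x := by rw [hz.2]
              _ = z * (y * x) := by ring
              _ = z * y := by rw [hyx]
              _ = z := hz.2
          · intro hle
            have hxmem : x ∈ Finset.univ.filter (fun z : V => z * x = z) := by
              simp [hB x]
            have := hle hxmem
            rw [Finset.mem_filter] at this
            -- x * y = x, together with y * x = y gives x = y
            exact hyxne (by linear_combination this.2 - hyx)
        have hcard' : (Finset.univ.filter (fun z : V => z * y = z)).card ≤ n := by
          have := Finset.card_lt_card hsub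
          omega
        obtain ⟨p, hpS, hpy⟩ := ih y hcard' hy0
        refine ⟨p, hpS, ?_⟩
        calc (1 + p) * x = ((1 + p) * y) * x := by rw [hpy]
          _ = (1 + p) * (y * x) := by ring
          _ = (1 + p) * y := by rw [hyx]
          _ = 1 + p := hpy
  -- sum of negated primes is 1
  have hsum : (∑ p ∈ S, (1 + p)) = 1 := by
    by_contra hne
    have h1s : 1 + ∑ p ∈ S, (1 + p) ≠ 0 := by
      intro h
      exact hne (by linear_combination h - h2 1)
    obtain ⟨p₀, hp₀, hp₀x⟩ := hC2 _ _ le_rfl h1s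
    have hmul : (1 + p₀) * ∑ p ∈ S, (1 + p) = (1 + p₀) := by
      rw [Finset.mul_sum, Finset.sum_eq_single p₀]
      · exact hB (1 + p₀)
      · intro q hq hqne
        exact hC1 p₀ hp₀ q hq (fun h => hqne h.symm)
      · intro h
        exact absurd hp₀ h
    have h0 : (1 : V) + p₀ = 0 := by linear_combination hp₀x - hmul
    have hp₀1 : p₀ ≠ 1 := by
      rw [hSdef, Finset.mem_filter] at hp₀
      exact hp₀.2.1
    exact hp₀1 (by linear_combination h0 - h2 1)
  -- product of primes is 0
  have hprod : (∏ p ∈ S, p) = 0 := by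
    by_contra hne
    obtain ⟨p₀, hp₀, hp₀x⟩ := hC2 _ _ le_rfl hne
    have hzero : (1 + p₀) * ∏ p ∈ S, p = 0 := by
      rw [← Finset.mul_prod_erase S _ hp₀]
      have hpe : (1 + p₀) * p₀ = 0 := by linear_combination hB p₀ + h2 p₀
      calc (1 + p₀) * (p₀ * ∏ p ∈ S.erase p₀, p)
          = ((1 + p₀) * p₀) * ∏ p ∈ S.erase p₀, p := by ring
        _ = 0 := by rw [hpe, zero_mul]
    rw [hp₀x] at hzero
    have hp₀1 : p₀ ≠ 1 := by
      rw [hSdef, Finset.mem_filter] at hp₀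
      exact hp₀.2.1
    exact hp₀1 (by linear_combination hzero - h2 1)
  exact ⟨hsum, hprod⟩
end

section
/- Let V be a finite nontrivial Boolean ring and p a logical prime of V. Then there exists exactly one ring homomorphism T : V → ℤ/2ℤ with T(1 + p) = 1; moreover this T satisfies T(1 + q) = 0 for every logical prime q ≠ p. -/
/-- For each logical prime `p` of a finite nontrivial Boolean ring
there is exactly one ring homomorphism `T : V → ℤ/2ℤ` with `T (1 + p) = 1`; moreover
this `T` maps every other negated prime to `0`. -/
theorem exists_unique_hom_of_prime (V : Type*) [CommRing V] [Fintype V] [Nontrivial V]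
    (hB : ∀ x : V, x * x = x) (p : V) (hp : IsLogicalPrime p) :
    (∃! T : V →+* ZMod 2, T (1 + p) = 1) ∧
    ∀ T : V →+* ZMod 2, T (1 + p) = 1 →
      ∀ q : V, IsLogicalPrime q → q ≠ p → T (1 + q) = 0 := by
  obtain ⟨hp1, hpA⟩ := hp
  set e : V := 1 + p with he
  have two : ∀ x : V, x + x = 0 := fun x => by
    linear_combination hB (x + x) - 4 * hB x
  have hpe : p * e = 0 := by
    rw [he]; linear_combination hB p + two p
  have hene : e ≠ 0 := by
    intro h
    rw [he] at h
    exact hp1 (by linear_combination h - two 1)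
  have dich : ∀ a : V, e * a = 0 ∨ e * a = e := by
    intro a
    have h0 : p * (e * a) = 0 := by rw [← mul_assoc, hpe, zero_mul]
    rcases hpA _ h0 with h | h
    · exact Or.inl h
    · exact Or.inr (by rw [h, he])
  have hee : e * e = e := hB e
  classical
  let f : V → ZMod 2 := fun a => if e * a = 0 then 0 else 1
  have hf : ∀ a, f a = if e * a = 0 then 0 else 1 := fun a => rfl
  have hfe : f 1 = 1 := by
    rw [hf]; simp [hene]
  let T : V →+* ZMod 2 :=
    { toFun := f
      map_one' := hfe
      map_mul' := by
        intro a b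
        simp only [hf]
        rcases dich a with ha | ha
        · have : e * (a * b) = 0 := by rw [← mul_assoc, ha, zero_mul]
          simp [this, ha]
        · rcases dich b with hb | hb
          · have : e * (a * b) = 0 := by
              rw [show e * (a * b) = e * b * a by ring, hb, zero_mul]
            simp [this, hb]
          · have : e * (a * b) = e := by rw [← mul_assoc, ha, hb]
            simp [this, ha, hb, hene]
      map_zero' := by simp [hf]
      map_add' := by
        intro a b
        simp only [hf]
        have hsum : e * (a + b) = e * a + e * b := by ring
        rcases dich a with ha | ha <;> rcases dich b with hb | hb
        · simp [hsum, ha, hb]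
        · simp [hsum, ha, hb, hene]
        · simp [hsum, ha, hb, hene]
        · have : e * (a + b) = 0 := by rw [hsum, ha, hb, two]
          simp [this, ha, hb, hene]
          decide }
  have hT : ∀ a, T a = if e * a = 0 then 0 else 1 := fun a => rfl
  have hTe : T e = 1 := by rw [hT]; simp [hee, hene]
  have key : ∀ (T' : V →+* ZMod 2), T' e = 1 → ∀ a, T' a = if e * a = 0 then 0 else 1 := by
    intro T' hT' a
    have h1 : T' a = T' (e * a) := by rw [map_mul, hT', one_mul]
    rw [h1]
    rcases dich a with h | h
    · simp [h]
    · simp [h, hT', hene]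
  constructor
  · refine ⟨T, hTe, ?_⟩
    intro T' hT'
    ext a
    rw [key T' hT' a, hT]
  · intro T' hT' q hq hqp
    obtain ⟨hq1, hqA⟩ := hq
    have hz : e * (1 + q) = 0 := by
      rcases dich (1 + q) with h | h
      · exact h
      · exfalso
        have hq0 : q * e = 0 := by
          rw [he] at h ⊢
          linear_combination h
        rcases hqA _ hq0 with h1 | h1
        · exact hene h1
        · rw [he] at h1
          exact hqp (by linear_combination -h1)
    have := map_mul T' e (1 + q)
    rw [hz, map_zero, hT', one_mul] at this
    exact this.symm
end

section
/- Let V be a finite nontrivial Boolean ring with cardinality 2^N. Then there are exactly N ring homomorphisms from V to ℤ/2ℤ. -/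
/-!
A ring homomorphism to `ℤ/2ℤ` is determined by its kernel, and in a Boolean ring every residue
field is a domain consisting of idempotents, hence `ℤ/2ℤ`; so the homomorphisms `V →+* ℤ/2ℤ`
correspond to the maximal ideals of `V`. A finite Boolean ring is Artinian and reduced, hence the
product of its residue fields: `V ≃+* (MaximalSpectrum V → ℤ/2ℤ)`, so that
`|V| = 2 ^ #MaximalSpectrum V`.
-/

section

variable {R : Type*} [CommRing R]

theorem RingHom.eq_of_ker_eq_zmodTwo {f g : R →+* ZMod 2} (h : RingHom.ker f = RingHom.ker g) :
    f = g := by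
  have hval : ∀ u v : ZMod 2, (u = 0 ↔ v = 0) → u = v := by decide
  ext x
  exact hval _ _ (by simpa only [RingHom.mem_ker] using SetLike.ext_iff.mp h x)

noncomputable def ringEquivZModTwoOfMulSelf {K : Type*} [Ring K] [IsDomain K]
    (hK : ∀ x : K, x * x = x) : K ≃+* ZMod 2 :=
  have hcard : Nat.card K = 2 := Nat.card_eq_two_iff.mpr ⟨0, 1, zero_ne_one,
    Set.eq_univ_of_forall fun x => IsIdempotentElem.iff_eq_zero_or_one.mp (hK x)⟩
  have : Finite K := Nat.finite_of_card_ne_zero (by simp [hcard])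
  letI := Fintype.ofFinite K
  (ZMod.ringEquivOfPrime K Nat.prime_two (Fintype.card_eq_nat_card.trans hcard)).symm

noncomputable def MaximalSpectrum.quotientEquivZModTwo (hB : ∀ x : R, x * x = x)
    (m : MaximalSpectrum R) : R ⧸ m.asIdeal ≃+* ZMod 2 :=
  have := m.isMaximal
  letI := Ideal.Quotient.field m.asIdeal
  ringEquivZModTwoOfMulSelf fun x => by
    obtain ⟨y, rfl⟩ := Ideal.Quotient.mk_surjective x
    rw [← map_mul, hB]

noncomputable def ringHomZModTwoEquivMaximalSpectrum (hB : ∀ x : R, x * x = x) :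
    (R →+* ZMod 2) ≃ MaximalSpectrum R :=
  .ofBijective
    (fun f => ⟨RingHom.ker f, RingHom.ker_isMaximal_of_surjective f (ZMod.ringHom_surjective f)⟩)
    ⟨fun f g h => RingHom.eq_of_ker_eq_zmodTwo (congrArg MaximalSpectrum.asIdeal h), fun m => by
      refine ⟨(m.quotientEquivZModTwo hB).toRingHom.comp (Ideal.Quotient.mk _), ?_⟩
      ext1
      exact (RingHom.ker_equiv_comp _ _).trans Ideal.mk_ker⟩

theorem card_eq_two_pow_card_maximalSpectrum [Finite R] (hB : ∀ x : R, x * x = x) :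
    Nat.card R = 2 ^ Nat.card (MaximalSpectrum R) := by
  have : IsArtinianRing R := isArtinian_of_finite
  have : IsReduced R := ⟨fun x => IsIdempotentElem.eq_zero_of_isNilpotent (hB x)⟩
  calc Nat.card R = Nat.card (MaximalSpectrum R → ZMod 2) :=
        Nat.card_congr ((IsArtinianRing.equivPi R).toRingEquiv.trans
          (RingEquiv.piCongrRight (MaximalSpectrum.quotientEquivZModTwo hB))).toEquiv
    _ = 2 ^ Nat.card (MaximalSpectrum R) := by simp [Nat.card_fun]

end

theorem card_homs_eq_general (V : Type*) [CommRing V] [Fintype V]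
    (hB : ∀ x : V, x * x = x) (N : ℕ) (hcard : Fintype.card V = 2 ^ N) :
    Nat.card (V →+* ZMod 2) = N := by
  rw [Nat.card_congr (ringHomZModTwoEquivMaximalSpectrum hB)]
  have hpow := card_eq_two_pow_card_maximalSpectrum hB
  rw [Nat.card_eq_fintype_card, hcard] at hpow
  exact Nat.pow_right_injective le_rfl hpow.symm

/-- A finite nontrivial Boolean ring of cardinality `2 ^ N` admits
exactly `N` ring homomorphisms to `ℤ/2ℤ`. -/
theorem card_homs_eq (V : Type*) [CommRing V] [Fintype V] [Nontrivial V]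
    (hB : ∀ x : V, x * x = x) (N : ℕ) (hcard : Fintype.card V = 2 ^ N) :
    Nat.card (V →+* ZMod 2) = N :=
  card_homs_eq_general V hB N hcard
end

section
/- Let V be a finite nontrivial Boolean ring. Then the evaluation map sending a ∈ V to the function (T ↦ T(a)) is a bijection from V onto the set of all functions from the set of ring homomorphisms V → ℤ/2ℤ to ℤ/2ℤ. -/
/-- For a finite nontrivial Boolean ring `V`, the evaluation map
`a ↦ (T ↦ T a)` is a bijection from `V` onto the functions from the set of ring
homomorphisms `V → ℤ/2ℤ` to `ℤ/2ℤ`. -/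
theorem evaluation_bijective (V : Type*) [CommRing V] [Fintype V] [Nontrivial V]
    (hB : ∀ x : V, x * x = x) :
    Function.Bijective (fun (a : V) (T : V →+* ZMod 2) => T a) := by
  classical
  -- Key: for every nonzero c there is a hom sending c to 1
  have key : ∀ c : V, c ≠ 0 → ∃ T : V →+* ZMod 2, T c = 1 := by
    intro c hc
    have hproper : Ideal.span {1 - c} ≠ ⊤ := by
      intro h
      have h1 : (1 : V) ∈ Ideal.span {1 - c} := h ▸ Submodule.mem_top
      obtain ⟨r, hr⟩ := Ideal.mem_span_singleton'.mp h1
      exact hc (by linear_combination (-c) * hr - r * hB c)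
    obtain ⟨M, hM, hle⟩ := Ideal.exists_le_maximal _ hproper
    haveI := hM
    haveI : Finite (V ⧸ M) :=
      Finite.of_surjective (Ideal.Quotient.mk M) Ideal.Quotient.mk_surjective
    haveI : Fintype (V ⧸ M) := Fintype.ofFinite _
    have helem : ∀ y : V ⧸ M, y = 0 ∨ y = 1 := by
      intro y
      obtain ⟨x, rfl⟩ := Ideal.Quotient.mk_surjective y
      have hy : (Ideal.Quotient.mk M x) * (Ideal.Quotient.mk M x) = Ideal.Quotient.mk M x := by
        rw [← map_mul, hB]
      have := mul_eq_zero.mp (show (Ideal.Quotient.mk M x) * ((Ideal.Quotient.mk M x) - 1) = 0 by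
        rw [mul_sub, hy, mul_one, sub_self])
      rcases this with h | h
      · exact Or.inl h
      · exact Or.inr (by linear_combination h)
    have hcard : Fintype.card (V ⧸ M) = 2 := by
      have huniv : (Finset.univ : Finset (V ⧸ M)) = {0, 1} := by
        ext y
        simp only [Finset.mem_univ, true_iff, Finset.mem_insert, Finset.mem_singleton]
        exact helem y
      rw [← Finset.card_univ, huniv]
      simp
    let e : ZMod 2 ≃+* (V ⧸ M) := ZMod.ringEquivOfPrime _ (by norm_num) hcard
    refine ⟨e.symm.toRingHom.comp (Ideal.Quotient.mk M), ?_⟩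
    have hmem : (1 - c) ∈ M := hle (Ideal.subset_span rfl)
    have h0 : Ideal.Quotient.mk M (1 - c) = 0 := (Ideal.Quotient.eq_zero_iff_mem).mpr hmem
    have h1 : Ideal.Quotient.mk M c = 1 := by
      have := h0
      rw [map_sub, map_one, sub_eq_zero] at this
      exact this.symm
    simp [h1]
  constructor
  · -- injectivity
    intro a b hab
    by_contra hne
    obtain ⟨T, hT⟩ := key (a - b) (sub_ne_zero.mpr hne)
    have : T a = T b := congrFun hab T
    rw [map_sub, this, sub_self] at hT
    exact zero_ne_one hT
  · -- surjectivity
    intro f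
    haveI : Finite (V →+* ZMod 2) := Finite.of_injective _ DFunLike.coe_injective
    haveI : Fintype (V →+* ZMod 2) := Fintype.ofFinite _
    -- separation: distinct homs can be separated
    have sep : ∀ T T' : V →+* ZMod 2, T ≠ T' → ∃ x : V, T x = 1 ∧ T' x = 0 := by
      intro T T' hne
      obtain ⟨y, hy⟩ := DFunLike.ne_iff.mp hne
      have h2 : ∀ z : ZMod 2, z = 0 ∨ z = 1 := by decide
      rcases h2 (T y) with h | h <;> rcases h2 (T' y) with h' | h'
      · exact absurd (h.trans h'.symm) hy
      · exact ⟨1 + y, by rw [map_add, map_one, h]; decide, by rw [map_add, map_one, h']; decide⟩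
      · exact ⟨y, h, h'⟩
      · exact absurd (h.trans h'.symm) hy
    choose! xf hx1 hx0 using sep
    set S0 : Finset (V →+* ZMod 2) := Finset.univ.filter (fun T => f T = 0) with hS0
    set S1 : Finset (V →+* ZMod 2) := Finset.univ.filter (fun T => f T = 1) with hS1
    let aT : (V →+* ZMod 2) → V := fun T => ∏ T' ∈ S0, xf T T'
    have hne_of : ∀ T T' : V →+* ZMod 2, f T = 1 → f T' = 0 → T ≠ T' := by
      intro T T' h1 h0 h
      rw [h, h0] at h1
      exact one_ne_zero h1.symm
    have haT1 : ∀ T ∈ S1, T (aT T) = 1 := by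
      intro T hT
      rw [Finset.mem_filter] at hT
      rw [map_prod]
      refine Finset.prod_eq_one ?_
      intro T' hT'
      rw [Finset.mem_filter] at hT'
      exact hx1 T T' (hne_of T T' hT.2 hT'.2)
    have haT0 : ∀ T ∈ S1, ∀ T'' ∈ S0, T'' (aT T) = 0 := by
      intro T hT T'' hT''
      have hT2 := (Finset.mem_filter.mp hT).2
      have hT''2 := (Finset.mem_filter.mp hT'').2
      rw [map_prod]
      exact Finset.prod_eq_zero hT'' (hx0 T T'' (hne_of T T'' hT2 hT''2))
    refine ⟨1 - ∏ T ∈ S1, (1 - aT T), ?_⟩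
    funext T''
    simp only
    rw [map_sub, map_one, map_prod]
    have h2 : ∀ z : ZMod 2, z = 0 ∨ z = 1 := by decide
    rcases h2 (f T'') with h | h
    · have hmem : T'' ∈ S0 := by rw [hS0, Finset.mem_filter]; exact ⟨Finset.mem_univ _, h⟩
      have : ∀ T ∈ S1, T'' (1 - aT T) = 1 := by
        intro T hT
        rw [map_sub, map_one, haT0 T hT T'' hmem, sub_zero]
      rw [Finset.prod_congr rfl this, Finset.prod_const_one, sub_self, h]
    · have hmem : T'' ∈ S1 := by rw [hS1, Finset.mem_filter]; exact ⟨Finset.mem_univ _, h⟩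
      have : ∀ T ∈ S1, T'' (1 - aT T) = T'' (1 - aT T) := fun _ _ => rfl
      rw [Finset.prod_eq_zero hmem (show T'' (1 - aT T'') = 0 by
        rw [map_sub, map_one, haT1 T'' hmem, sub_self]), sub_zero, h]
end

section
/- Let V be a finite Boolean ring with cardinality 2^(2^n) for some natural number n. Then there exist elements a_1, …, a_n of V such that the map sending each function s : {1,…,n} → {0,1} to the product over j of (a_j if s(j) = 1, and 1 + a_j if s(j) = 0) is a bijection from the set of such functions onto the set of negated primes {1 + p | p a logical prime of V}. -/
namespace BoolAux

variable {V : Type*} [CommRing V]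

def IsAtomE (e : V) : Prop := e ≠ 0 ∧ ∀ x : V, x * e = 0 ∨ x * e = e

theorem addSelf (hB : ∀ x : V, x * x = x) (x : V) : x + x = 0 := by
  linear_combination hB (x + x) - 4 * hB x

theorem atom_mul_atom (hB : ∀ x : V, x * x = x) {e f : V} (he : IsAtomE e) (hf : IsAtomE f)
    (hne : e ≠ f) : e * f = 0 := by
  rcases hf.2 e with h | h
  · exact h
  · rcases he.2 f with h' | h'
    · exact absurd (by rw [← h, mul_comm, h']) hf.1
    · exact absurd (h'.symm.trans (by rw [mul_comm, h])) hne

theorem exists_atom_le (hB : ∀ x : V, x * x = x) [Fintype V] (z : V) (hz : z ≠ 0) :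
    ∃ e : V, IsAtomE e ∧ e * z = e := by
  classical
  suffices H : ∀ k, ∀ z : V, (Finset.univ.filter fun w => w * z = w).card ≤ k → z ≠ 0 →
      ∃ e, IsAtomE e ∧ e * z = e from H _ z le_rfl hz
  intro k
  induction k with
  | zero =>
    intro z hk hz
    exfalso
    have hzmem : z ∈ Finset.univ.filter (fun w => w * z = w) := by simp [hB z]
    have := Finset.card_pos.mpr ⟨z, hzmem⟩
    omega
  | succ k ih =>
    intro z hk hz
    by_cases hA : IsAtomE z
    · exact ⟨z, hA, hB z⟩
    · rw [IsAtomE, not_and] at hA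
      have h2 := hA hz
      push_neg at h2
      obtain ⟨x, hx1, hx2⟩ := h2
      set w := x * z with hw
      have hwz : w * z = w := by rw [hw]; linear_combination x * hB z
      have hsubset : (Finset.univ.filter fun u => u * w = u) ⊆
          Finset.univ.filter fun u => u * z = u := by
        intro u hu
        simp only [Finset.mem_filter, Finset.mem_univ, true_and] at hu ⊢
        calc u * z = u * w * z := by rw [hu]
          _ = u * (w * z) := by ring
          _ = u * w := by rw [hwz]
          _ = u := hu
      have hznot : z ∉ Finset.univ.filter fun u => u * w = u := by
        simp only [Finset.mem_filter, Finset.mem_univ, true_and]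
        intro hzw
        have h3 : z * w = w := by rw [hw]; linear_combination x * hB z
        exact hx2 (h3.symm.trans hzw)
      have hlt : (Finset.univ.filter fun u => u * w = u).card <
          (Finset.univ.filter fun u => u * z = u).card :=
        Finset.card_lt_card ((Finset.ssubset_iff_of_subset hsubset).mpr
          ⟨z, by simp [hB z], hznot⟩)
      obtain ⟨e, he, hew⟩ := ih w (by omega) hx1
      refine ⟨e, he, ?_⟩
      calc e * z = e * w * z := by rw [hew]
        _ = e * (w * z) := by ring
        _ = e * w := by rw [hwz]
        _ = e := hew

theorem eq_of_forall_atom (hB : ∀ x : V, x * x = x) [Fintype V] {x y : V}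
    (h : ∀ e : V, IsAtomE e → (e * x = e ↔ e * y = e)) : x = y := by
  by_contra hne
  have hz : x + y ≠ 0 := by
    intro h0; exact hne (by linear_combination h0 - addSelf hB y)
  obtain ⟨e, he, hez⟩ := exists_atom_le hB (x + y) hz
  have hiff := h e he
  rcases he.2 x with hx | hx <;> rcases he.2 y with hy | hy
  · exact he.1 (by linear_combination hx + hy - hez)
  · have h1 : e * x = e := hiff.mpr (by rw [mul_comm]; exact hy)
    exact he.1 (by linear_combination hx - h1)
  · have h1 : e * y = e := hiff.mp (by rw [mul_comm]; exact hx)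
    exact he.1 (by linear_combination hy - h1)
  · exact he.1 (by linear_combination hez - hx - hy)

end BoolAux

/-- If a finite Boolean ring has cardinality `2 ^ (2 ^ n)`, then
there are elements `a 1, …, a n` such that `s ↦ ∏ j, (a j if s j, else 1 + a j)` is a
bijection from the sign patterns `s : Fin n → Bool` onto the set of negated primes. -/
theorem exists_basic_variables (V : Type*) [CommRing V] [Fintype V]
    (hB : ∀ x : V, x * x = x) (n : ℕ) (hcard : Fintype.card V = 2 ^ (2 ^ n)) :
    ∃ a : Fin n → V,
      Set.BijOn (fun s : Fin n → Bool => ∏ j, if s j then a j else 1 + a j)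
        Set.univ {x : V | ∃ p : V, IsLogicalPrime p ∧ x = 1 + p} := by
  classical
  -- The set of negated primes is exactly the set of atoms.
  have hset : {x : V | ∃ p : V, IsLogicalPrime p ∧ x = 1 + p}
      = {e : V | BoolAux.IsAtomE e} := by
    ext e
    simp only [Set.mem_setOf_eq]
    constructor
    · rintro ⟨p, ⟨hp1, hp2⟩, rfl⟩
      refine ⟨fun h0 => hp1 (by linear_combination h0 - BoolAux.addSelf hB 1), fun x => ?_⟩
      exact hp2 (x * (1 + p)) (by linear_combination x * hB p + x * BoolAux.addSelf hB p)
    · rintro ⟨he0, he2⟩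
      refine ⟨1 + e, ⟨fun h1 => he0 (by linear_combination h1), fun x hx => ?_⟩, ?_⟩
      · have hxe : x * e = x := by linear_combination BoolAux.addSelf hB (x * e) - hx
        rcases he2 x with h | h
        · left; rw [← hxe, h]
        · right; rw [← hxe, h]; linear_combination -BoolAux.addSelf hB 1
      · linear_combination -BoolAux.addSelf hB 1
  rw [hset]
  -- atoms
  set A := {e : V // BoolAux.IsAtomE e} with hA
  have horth : ∀ e f : A, (e : V) * f = if e = f then (e : V) else 0 := by
    intro e f
    by_cases h : e = f
    · simp [h, hB]
    · simp only [h, if_false]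
      exact BoolAux.atom_mul_atom hB e.2 f.2 (fun hef => h (Subtype.ext hef))
  -- cardinality of atoms
  have hbij : Function.Bijective (fun (x : V) (e : A) => ((e : V) * x = (e : V) : Prop)) := by
    constructor
    · intro x y hxy
      apply BoolAux.eq_of_forall_atom hB
      intro e he
      exact iff_of_eq (congrFun hxy ⟨e, he⟩)
    · intro f
      refine ⟨∑ e : A, if f e then (e : V) else 0, ?_⟩
      funext e'
      have hval : (e' : V) * (∑ e : A, if f e then (e : V) else 0)
          = if f e' then (e' : V) else 0 := by
        rw [Finset.mul_sum, Finset.sum_eq_single e']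
        · split_ifs <;> simp [hB]
        · intro b _ hb
          have hob := horth e' b
          rw [if_neg (Ne.symm hb)] at hob
          split_ifs <;> simp [hob]
        · simp
      simp only
      rw [eq_iff_iff]
      constructor
      · intro hx
        by_contra hf
        rw [if_neg hf] at hval
        exact e'.2.1 (hval ▸ hx).symm
      · intro hf
        rw [if_pos hf] at hval
        exact hval
  have hcV : Fintype.card V = 2 ^ Fintype.card A := by
    rw [Fintype.card_of_bijective hbij, Fintype.card_fun, Fintype.card_prop]
  have hpow : (2 : ℕ) ^ Fintype.card A = 2 ^ (2 ^ n) := by rw [← hcV, hcard]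
  have hcardA : Fintype.card A = 2 ^ n := Nat.pow_right_injective le_rfl hpow
  have hcardF : Fintype.card A = Fintype.card (Fin n → Bool) := by
    simp [hcardA]
  set σ : A ≃ (Fin n → Bool) := Fintype.equivOfCardEq hcardF with hσ
  set E : (Fin n → Bool) → V := fun s => ((σ.symm s : A) : V) with hE
  have hEatom : ∀ s, BoolAux.IsAtomE (E s) := fun s => (σ.symm s).2
  have hEinj : Function.Injective E := fun s t h => σ.symm.injective (Subtype.ext h)
  have hEorth : ∀ s t, E s * E t = if s = t then E s else 0 := by
    intro s t
    rw [hE]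
    simp only
    rw [horth]
    congr 1
    rw [eq_iff_iff, σ.symm.injective.eq_iff]
  have hEsum : (∑ s : Fin n → Bool, E s) = 1 := by
    apply BoolAux.eq_of_forall_atom hB
    intro e he
    have hee : E (σ ⟨e, he⟩) = e := by simp [hE]
    have hval : e * ∑ s : Fin n → Bool, E s = e := by
      rw [Finset.mul_sum, Finset.sum_eq_single (σ ⟨e, he⟩)]
      · rw [hee, hB]
      · intro b _ hb
        rw [← hee]
        rw [hEorth]
        rw [if_neg (fun h => hb h.symm)]
      · simp
    rw [hval, mul_one]
  -- the basic variables
  set a : Fin n → V := fun j => ∑ s : Fin n → Bool, if s j then E s else 0 with ha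
  have hfac : ∀ (t : Fin n → Bool) (j : Fin n),
      (if t j then a j else 1 + a j) = ∑ s : Fin n → Bool, if s j = t j then E s else 0 := by
    intro t j
    by_cases ht : t j
    · rw [if_pos ht, ha]
      apply Finset.sum_congr rfl
      intro s _
      simp [ht]
    · have ht' : t j = false := by simpa using ht
      rw [if_neg ht, ha, ← hEsum, ← Finset.sum_add_distrib]
      apply Finset.sum_congr rfl
      intro s _
      by_cases hs : s j <;> simp [hs, ht', BoolAux.addSelf hB]
  have hprodJ : ∀ (t : Fin n → Bool) (J : Finset (Fin n)),
      (∏ j ∈ J, ∑ s : Fin n → Bool, if s j = t j then E s else 0)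
        = ∑ s : Fin n → Bool, if (∀ j ∈ J, s j = t j) then E s else 0 := by
    intro t J
    induction J using Finset.induction_on with
    | empty => simp [hEsum]
    | @insert j J hj ih =>
      rw [Finset.prod_insert hj, ih, Finset.sum_mul_sum]
      have step1 : ∀ s : Fin n → Bool,
          (∑ s' : Fin n → Bool, (if s j = t j then E s else 0) *
            (if (∀ j' ∈ J, s' j' = t j') then E s' else 0))
          = if (s j = t j ∧ ∀ j' ∈ J, s j' = t j') then E s else 0 := by
        intro s
        rw [Finset.sum_eq_single s]
        · by_cases h1 : s j = t j <;> by_cases h2 : ∀ j' ∈ J, s j' = t j' <;>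
            simp [h1, h2, hB]
        · intro b _ hb
          have := hEorth s b
          rw [if_neg (fun h => hb h.symm)] at this
          split_ifs <;> simp [this]
        · simp
      rw [Finset.sum_congr rfl (fun s _ => step1 s)]
      apply Finset.sum_congr rfl
      intro s _
      congr 1
      rw [eq_iff_iff, Finset.forall_mem_insert]
  have hprod : ∀ t : Fin n → Bool, (∏ j, if t j then a j else 1 + a j) = E t := by
    intro t
    calc (∏ j, if t j then a j else 1 + a j)
        = ∏ j, ∑ s : Fin n → Bool, if s j = t j then E s else 0 :=
          Finset.prod_congr rfl fun j _ => hfac t j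
      _ = ∑ s : Fin n → Bool, if (∀ j ∈ Finset.univ, s j = t j) then E s else 0 :=
          hprodJ t Finset.univ
      _ = E t := by
          rw [Finset.sum_eq_single t]
          · simp
          · intro b _ hb
            rw [if_neg]
            intro h
            exact hb (funext fun j => h j (Finset.mem_univ j))
          · simp
  refine ⟨a, ?_, ?_, ?_⟩
  · intro t _
    have := hEatom t
    rw [← hprod t] at this
    exact this
  · intro s _ t _ h
    simp only at h
    rw [hprod s, hprod t] at h
    exact hEinj h
  · intro e he
    refine ⟨σ ⟨e, he⟩, Set.mem_univ _, ?_⟩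
    exact (hprod _).trans (by simp [hE])
end

section
/- Let V be a Boolean ring, let s ∈ V with s ≠ 0 and s ≠ 1, and let K_s = {a ∈ V | a*s = 0}. Suppose p ∈ K_s is a logical prime of the Boolean ring K_s (whose multiplicative unit is 1 + s), i.e., p ≠ 1 + s and for every a ∈ K_s, p*a = 0 implies a = 0 or a = p + 1 + s. Then p + s is a logical prime of V. -/
/-- Let `V` be a Boolean ring, `s ≠ 0, 1`, and let `p ∈ K_s` be a
logical prime of the Boolean ring `K_s = {a | a * s = 0}` (whose unit is `1 + s`).
Then `p + s` is a logical prime of `V`. -/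
theorem prime_of_subring_prime (V : Type*) [CommRing V] (hB : ∀ x : V, x * x = x)
    (s : V) (hs0 : s ≠ 0) (hs1 : s ≠ 1) (p : V) (hpK : p * s = 0)
    (hpne : p ≠ 1 + s)
    (hprime : ∀ a : V, a * s = 0 → p * a = 0 → a = 0 ∨ a = p + (1 + s)) :
    p + s ≠ 1 ∧ ∀ a : V, (p + s) * a = 0 → a = 0 ∨ a = 1 + (p + s) := by
  have h2 : (1 + 1 : V) = 0 := by linear_combination hB (1 + 1)
  constructor
  · intro h
    exact hpne (by linear_combination h - s * h2)
  · intro a ha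
    have has : a * s = 0 := by linear_combination s * ha - a * hB s - a * hpK
    have hpa : p * a = 0 := by linear_combination ha - has
    rcases hprime a has hpa with h | h
    · exact Or.inl h
    · exact Or.inr (by linear_combination h)
end

section
/- Let V be a finite nontrivial Boolean ring and a ∈ V. Then the number of ring homomorphisms T : V → ℤ/2ℤ with T(a) = 1 equals the number of logical primes p of V with (1 + p)*a = 1 + p. -/
open scoped Classical

section Aux

variable {V : Type*} [CommRing V]

lemma boolTwo (hB : ∀ x : V, x * x = x) (x : V) : x + x = 0 := by
  linear_combination hB (x + x) - 4 * hB x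

/-- The hom attached to an "atom" `e`. -/
noncomputable def atomHom (hB : ∀ x : V, x * x = x) (e : V)
    (he : ∀ x : V, e * x = 0 ∨ e * x = e) (hne : e ≠ 0) : V →+* ZMod 2 where
  toFun x := if e * x = e then 1 else 0
  map_one' := by simp
  map_mul' x y := by
    have key : e * (x * y) = (e * x) * (e * y) := by
      linear_combination (x * y) * (hB e).symm
    rcases he x with hx | hx <;> rcases he y with hy | hy <;>
      simp [key, hx, hy, hB e, hne, Ne.symm hne] <;> decide
  map_zero' := by simp [Ne.symm hne]
  map_add' x y := by
    have key : e * (x + y) = e * x + e * y := mul_add e x y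
    rcases he x with hx | hx <;> rcases he y with hy | hy <;>
      simp [key, hx, hy, boolTwo hB e, hne, Ne.symm hne] <;> decide

variable [Fintype V]

noncomputable def kerProd (T : V →+* ZMod 2) : V :=
  ∏ x ∈ Finset.univ.filter (fun x => T x = 0), (1 + x)

lemma kerProd_map (T : V →+* ZMod 2) : T (kerProd T) = 1 := by
  rw [kerProd, map_prod]
  apply Finset.prod_eq_one
  intro x hx
  rw [Finset.mem_filter] at hx
  simp [hx.2]

lemma kerProd_ann (hB : ∀ x : V, x * x = x) (T : V →+* ZMod 2) {x : V}
    (hx : T x = 0) : kerProd T * x = 0 := by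
  have hx' : x ∈ Finset.univ.filter (fun x => T x = 0) := by simp [hx]
  have h : kerProd T
      = (1 + x) * ∏ y ∈ (Finset.univ.filter (fun x => T x = 0)).erase x, (1 + y) :=
    (Finset.mul_prod_erase _ (fun y => 1 + y) hx').symm
  have h0 : (1 + x) * x = 0 := by linear_combination hB x + boolTwo hB x
  rw [h, mul_right_comm, h0, zero_mul]

end Aux

/-- In a finite nontrivial Boolean ring, the number of ring
homomorphisms `T : V → ℤ/2ℤ` with `T a = 1` equals the number of logical primes `p`
with `(1 + p) * a = 1 + p`. -/
theorem card_satisfying_homs (V : Type*) [CommRing V] [Fintype V] [Nontrivial V]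
    (hB : ∀ x : V, x * x = x) (a : V) :
    Nat.card {T : V →+* ZMod 2 // T a = 1} =
      Nat.card {p : V // IsLogicalPrime p ∧ (1 + p) * a = 1 + p} := by
  have two := boolTwo hB
  have h01 : ∀ z : ZMod 2, z = 0 ∨ z = 1 := by decide
  -- forward data
  have fwd : ∀ T : V →+* ZMod 2, T a = 1 →
      IsLogicalPrime (1 + kerProd T) ∧
        (1 + (1 + kerProd T)) * a = 1 + (1 + kerProd T) := by
    intro T hTa
    set e := kerProd T with hedef
    have hTe : T e = 1 := kerProd_map T
    have hcompl : 1 + (1 + e) = e := by linear_combination two 1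
    have hea : ∀ b : V, T b = 1 → e * b = e := by
      intro b hb
      have h1 : T (b + e) = 0 := by rw [map_add, hb, hTe]; decide
      have h2 : e * (b + e) = 0 := by
        rw [hedef]; exact kerProd_ann hB T h1
      linear_combination h2 - hB e - two e
    constructor
    · constructor
      · intro h
        have he0 : e = 0 := by linear_combination h
        rw [he0] at hTe
        simp at hTe
      · intro b hb
        have hbe : e * b = b := by linear_combination hb - two b
        rcases h01 (T b) with hTb | hTb
        · left
          have h3 : e * b = 0 := by
            rw [hedef]; exact kerProd_ann hB T hTb
          linear_combination h3 - hbe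
        · right
          rw [hcompl, ← hbe, hea b hTb]
    · rw [hcompl]
      exact hea a hTa
  -- backward data
  have atomprop : ∀ p : V, IsLogicalPrime p →
      (∀ x : V, (1 + p) * x = 0 ∨ (1 + p) * x = 1 + p) ∧ (1 + p) ≠ 0 := by
    intro p hp
    constructor
    · intro x
      have h : p * ((1 + p) * x) = 0 := by linear_combination x * (hB p) + x * two p
      exact hp.2 _ h
    · intro h
      have hp1 : p = 1 := by linear_combination h - two 1
      exact hp.1 hp1
  have bwd : ∀ (p : V) (hp : IsLogicalPrime p), (1 + p) * a = 1 + p →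
      atomHom hB (1 + p) (atomprop p hp).1 (atomprop p hp).2 a = 1 := by
    intro p hp hpa
    show (if (1 + p) * a = 1 + p then (1 : ZMod 2) else 0) = 1
    rw [if_pos hpa]
  apply Nat.card_congr
  refine
    { toFun := fun T => ⟨1 + kerProd T.1, fwd T.1 T.2⟩
      invFun := fun p =>
        ⟨atomHom hB (1 + p.1) (atomprop p.1 p.2.1).1 (atomprop p.1 p.2.1).2,
          bwd p.1 p.2.1 p.2.2⟩
      left_inv := ?_
      right_inv := ?_ }
  · rintro ⟨T, hTa⟩
    ext x
    set e := kerProd T with hedef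
    have hTe : T e = 1 := kerProd_map T
    have hcompl : 1 + (1 + e) = e := by linear_combination two 1
    show (if (1 + (1 + e)) * x = 1 + (1 + e) then (1 : ZMod 2) else 0) = T x
    rw [hcompl]
    have hne : e ≠ 0 := by intro h; rw [h] at hTe; simp at hTe
    rcases h01 (T x) with hTx | hTx
    · have h0 : e * x = 0 := by
        rw [hedef]; exact kerProd_ann hB T hTx
      rw [h0, hTx, if_neg (Ne.symm hne)]
    · have h1 : T (x + e) = 0 := by rw [map_add, hTx, hTe]; decide
      have h2 : e * (x + e) = 0 := by
        rw [hedef]; exact kerProd_ann hB T h1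
      have h3 : e * x = e := by linear_combination h2 - hB e - two e
      rw [h3, hTx, if_pos rfl]
  · rintro ⟨p, hp, hpa⟩
    have hap := atomprop p hp
    set T := atomHom hB (1 + p) hap.1 hap.2 with hT
    have hTp : T p = 0 := by
      show (if (1 + p) * p = 1 + p then (1 : ZMod 2) else 0) = 0
      have h : (1 + p) * p = 0 := by linear_combination hB p + two p
      rw [h, if_neg (Ne.symm hap.2)]
    have h1 : kerProd T * p = 0 := kerProd_ann hB T hTp
    have h2 : p * kerProd T = 0 := by rw [mul_comm]; exact h1
    rcases hp.2 _ h2 with h | h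
    · exfalso
      have := kerProd_map T
      rw [h] at this
      simp at this
    · ext
      show 1 + kerProd T = p
      rw [h]
      linear_combination two 1
end
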